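/- Let 0 < s < 1/2 and f ∈ L²(ℝ). Then Σ_M M^{2s}‖P_M f‖²_{L²} ≤ C(s) (‖f‖²_{H^{-1}} + Σ_{N ∈ 2^ℕ} N^{2s} ∫ w(ξ,N)|f̂(ξ)|² dξ), where P_M are Littlewood–Paley projections and w(ξ,N) = 3N²ξ²/(4(ξ²+N²)(ξ²+4N²)). -/

import Mathlib

/-!
On the `k`-th dyadic shell `2^(k-1) < |ξ| ≤ 2^k` the weight `w(ξ, 2^k)` is at least `3/160`, so
each high-frequency piece of the left-hand side is dominated by the diagonal term of the
`Z`-series, and the piece `|ξ| ≤ 1` by the `H⁻¹` term.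

Since an infinite sum of reals is `0` when it diverges, one must also show that the `Z`-series
converges whenever the left-hand series does. This comes from the off-diagonal decay
`w(ξ, 2^n) ≤ 3 · 4^(-|n-k|)` on the `k`-th shell: for `s < 1` it dominates the `Z`-series by the
convolution of the left-hand series with the summable kernel `(2^(2s)/4)^|n-k|` (a Schur test).
-/

open MeasureTheory

/-- The weight `w(ξ,κ) = 3κ²ξ²/(4(ξ²+κ²)(ξ²+4κ²))`. -/
noncomputable def w (ξ κ : ℝ) : ℝ :=
  3 * κ ^ 2 * ξ ^ 2 / (4 * (ξ ^ 2 + κ ^ 2) * (ξ ^ 2 + 4 * κ ^ 2))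

/-- The `k`-th Littlewood–Paley frequency region: `{|ξ| ≤ 1}` for `k = 0`,
`{2^{k-1} < |ξ| ≤ 2^k}` for `k ≥ 1`. -/
def LPregion (k : ℕ) : Set ℝ :=
  if k = 0 then {ξ : ℝ | |ξ| ≤ 1}
  else {ξ : ℝ | (2 : ℝ) ^ (k - 1) < |ξ| ∧ |ξ| ≤ (2 : ℝ) ^ k}

open Set Function

lemma w_nonneg (ξ κ : ℝ) : 0 ≤ w ξ κ := by
  unfold w; positivity

lemma w_le_three_div_sixteen (ξ κ : ℝ) : w ξ κ ≤ 3 / 16 := by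
  unfold w
  apply div_le_of_le_mul₀ (by positivity) (by norm_num)
  nlinarith [mul_nonneg (sq_nonneg ξ) (sq_nonneg κ), sq_nonneg (ξ ^ 2), sq_nonneg (κ ^ 2)]

lemma w_le_three_mul_sq_div_sq (ξ : ℝ) {κ : ℝ} (hκ : κ ≠ 0) : w ξ κ ≤ 3 * ξ ^ 2 / κ ^ 2 := by
  unfold w
  rw [div_le_div_iff₀ (by positivity) (by positivity)]
  nlinarith [sq_nonneg ξ, sq_nonneg κ, sq_nonneg (ξ * κ), sq_nonneg (ξ ^ 2), sq_nonneg (ξ ^ 2 * κ)]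

lemma w_le_three_mul_sq_div_four_mul_sq {ξ κ : ℝ} (hξ : ξ ≠ 0) (hκ : κ ≠ 0) :
    w ξ κ ≤ 3 * κ ^ 2 / (4 * ξ ^ 2) := by
  unfold w
  rw [div_le_div_iff₀ (by positivity) (by positivity)]
  nlinarith [mul_nonneg (mul_nonneg (sq_nonneg κ) (sq_nonneg ξ)) (sq_nonneg κ),
    mul_nonneg (sq_nonneg κ) (sq_nonneg (κ ^ 2))]

lemma three_div_160_le_w {ξ κ : ℝ} (hκ : κ ≠ 0) (hlo : κ ^ 2 ≤ 4 * ξ ^ 2) (hhi : ξ ^ 2 ≤ κ ^ 2) :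
    3 / 160 ≤ w ξ κ := by
  unfold w
  rw [le_div_iff₀ (by positivity)]
  have hκ2 : 0 < κ ^ 2 := by positivity
  nlinarith [sq_nonneg ξ, mul_pos hκ2 hκ2]

lemma measurable_w (κ : ℝ) : Measurable fun ξ => w ξ κ := by
  unfold w; fun_prop

lemma abs_le_of_mem_LPregion {k : ℕ} {ξ : ℝ} (h : ξ ∈ LPregion k) : |ξ| ≤ 2 ^ k := by
  unfold LPregion at h
  split_ifs at h with hk
  · simpa [hk] using h
  · exact h.2

lemma lt_abs_of_mem_LPregion {k : ℕ} (hk : k ≠ 0) {ξ : ℝ} (h : ξ ∈ LPregion k) :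
    2 ^ (k - 1) < |ξ| := by
  rw [LPregion, if_neg hk] at h
  exact h.1

lemma measurableSet_LPregion (k : ℕ) : MeasurableSet (LPregion k) := by
  unfold LPregion
  split_ifs
  · exact (isClosed_le continuous_abs continuous_const).measurableSet
  · exact (isOpen_lt continuous_const continuous_abs).measurableSet.inter
      (isClosed_le continuous_abs continuous_const).measurableSet

lemma pairwise_disjoint_LPregion : Pairwise (Disjoint on LPregion) := by
  refine (pairwise_disjoint_on LPregion).2 fun j k hjk => disjoint_left.2 fun ξ hj hk => ?_
  have : (2 : ℝ) ^ j ≤ 2 ^ (k - 1) := pow_le_pow_right₀ one_le_two (by omega)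
  linarith [abs_le_of_mem_LPregion hj, lt_abs_of_mem_LPregion (by omega) hk]

lemma iUnion_LPregion : ⋃ k, LPregion k = univ := by
  classical
  refine eq_univ_of_forall fun ξ => mem_iUnion.2 ?_
  have hex : ∃ n : ℕ, |ξ| ≤ 2 ^ n :=
    (pow_unbounded_of_one_lt |ξ| one_lt_two).imp fun _ h => h.le
  rcases Nat.eq_zero_or_pos (Nat.find hex) with h0 | hpos
  · exact ⟨0, by simpa [LPregion, h0] using Nat.find_spec hex⟩
  · refine ⟨Nat.find hex, ?_⟩
    rw [LPregion, if_neg hpos.ne']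
    exact ⟨not_le.1 (Nat.find_min hex (Nat.sub_lt hpos one_pos)), Nat.find_spec hex⟩

lemma sq_two_pow (m : ℕ) : ((2 : ℝ) ^ m) ^ 2 = 4 ^ m := by
  rw [← pow_mul, mul_comm, pow_mul]; norm_num

lemma sq_le_four_pow_of_mem_LPregion {k : ℕ} {ξ : ℝ} (h : ξ ∈ LPregion k) : ξ ^ 2 ≤ 4 ^ k := by
  rw [← sq_abs, ← sq_two_pow]
  exact pow_le_pow_left₀ (abs_nonneg ξ) (abs_le_of_mem_LPregion h) 2

lemma four_pow_lt_four_mul_sq_of_mem_LPregion {k : ℕ} (hk : k ≠ 0) {ξ : ℝ}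
    (h : ξ ∈ LPregion k) : 4 ^ k < 4 * ξ ^ 2 := by
  have hpow : (4 : ℝ) ^ k = 4 * (2 ^ (k - 1)) ^ 2 := by
    rw [sq_two_pow, ← pow_succ', Nat.sub_add_cancel (Nat.pos_of_ne_zero hk)]
  rw [hpow, ← sq_abs ξ]
  gcongr
  exact lt_abs_of_mem_LPregion hk h

lemma four_pow_div_four_pow {m n : ℕ} (h : m ≤ n) : (4 : ℝ) ^ m / 4 ^ n = (1 / 4) ^ (n - m) := by
  rw [one_div, inv_pow, pow_sub₀ _ (by norm_num) h]
  field_simp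

lemma w_two_pow_le_of_mem_LPregion {k : ℕ} {ξ : ℝ} (h : ξ ∈ LPregion k) (n : ℕ) :
    w ξ (2 ^ n) ≤ 3 * (1 / 4) ^ Nat.dist n k := by
  rcases le_or_gt k n with hkn | hnk
  · calc w ξ (2 ^ n) ≤ 3 * ξ ^ 2 / 4 ^ n :=
          sq_two_pow n ▸ w_le_three_mul_sq_div_sq ξ (by positivity)
      _ ≤ 3 * (4 ^ k / 4 ^ n) := by
          rw [mul_div_assoc]; gcongr; exact sq_le_four_pow_of_mem_LPregion h
      _ = 3 * (1 / 4) ^ Nat.dist n k := by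
          rw [four_pow_div_four_pow hkn, Nat.dist_eq_sub_of_le_right hkn]
  · have hlo := four_pow_lt_four_mul_sq_of_mem_LPregion (by omega) h
    have hξ : ξ ≠ 0 := by rintro rfl; exact (pow_pos four_pos k).not_gt (by simpa using hlo)
    calc w ξ (2 ^ n) ≤ 3 * 4 ^ n / (4 * ξ ^ 2) :=
          sq_two_pow n ▸ w_le_three_mul_sq_div_four_mul_sq hξ (by positivity)
      _ ≤ 3 * (4 ^ n / 4 ^ k) := by
          rw [mul_div_assoc]; gcongr
      _ = 3 * (1 / 4) ^ Nat.dist n k := by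
          rw [four_pow_div_four_pow hnk.le, Nat.dist_eq_sub_of_le hnk.le]

lemma three_div_160_le_w_two_pow_of_mem_LPregion {k : ℕ} (hk : k ≠ 0) {ξ : ℝ}
    (h : ξ ∈ LPregion k) : 3 / 160 ≤ w ξ (2 ^ k) := by
  refine three_div_160_le_w (by positivity) ?_ ?_ <;> rw [sq_two_pow]
  · exact (four_pow_lt_four_mul_sq_of_mem_LPregion hk h).le
  · exact sq_le_four_pow_of_mem_LPregion h

lemma two_pow_rpow_mul_le {s : ℝ} (hs : 0 ≤ s) (n k : ℕ) :
    ((2 : ℝ) ^ n) ^ (2 * s) * (1 / 4) ^ Nat.dist n k ≤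
      ((2 : ℝ) ^ (2 * s) / 4) ^ Nat.dist n k * ((2 : ℝ) ^ k) ^ (2 * s) := by
  have hq : 1 ≤ (2 : ℝ) ^ (2 * s) := Real.one_le_rpow one_le_two (by positivity)
  rw [← Real.rpow_pow_comm zero_le_two, ← Real.rpow_pow_comm zero_le_two]
  calc ((2 : ℝ) ^ (2 * s)) ^ n * (1 / 4) ^ Nat.dist n k
      ≤ ((2 : ℝ) ^ (2 * s)) ^ (Nat.dist n k + k) * (1 / 4) ^ Nat.dist n k := by
        gcongr
        unfold Nat.dist; omega
    _ = ((2 : ℝ) ^ (2 * s) / 4) ^ Nat.dist n k * ((2 : ℝ) ^ (2 * s)) ^ k := by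
        rw [pow_add, div_eq_mul_one_div, mul_pow]; ring

lemma sum_pow_dist_le_tsum {r : ℝ} (hr0 : 0 ≤ r) (hr1 : r < 1) (k : ℕ) (u : Finset ℕ) :
    ∑ n ∈ u, r ^ Nat.dist n k ≤ ∑' z : ℤ, r ^ z.natAbs := by
  have hgeom := summable_geometric_of_lt_one hr0 hr1
  have hsum : Summable fun z : ℤ => r ^ z.natAbs :=
    .of_nat_of_neg (by simpa using hgeom) (by simpa using hgeom)
  have hinj : Injective fun n : ℕ => (n : ℤ) - k := fun a b h => by simpa using h
  calc ∑ n ∈ u, r ^ Nat.dist n k = ∑ n ∈ u, r ^ ((n : ℤ) - k).natAbs := by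
        congr! 2 with n; unfold Nat.dist; omega
    _ ≤ ∑' n : ℕ, r ^ ((n : ℤ) - k).natAbs :=
        (hsum.comp_injective hinj).sum_le_tsum u fun _ _ => by positivity
    _ ≤ ∑' z : ℤ, r ^ z.natAbs := tsum_comp_le_tsum_of_inj hsum (fun _ => by positivity) hinj

section Schur

variable {ι κ : Type*} {K : ι → κ → ℝ} {a : κ → ℝ} {B : ℝ}

lemma summable_kernel_mul (hK : ∀ n k, 0 ≤ K n k) (hKB : ∀ k (u : Finset ι), ∑ n ∈ u, K n k ≤ B)
    (ha : ∀ k, 0 ≤ a k) (hsa : Summable a) (n : ι) : Summable fun k => K n k * a k :=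
  (hsa.mul_left B).of_nonneg_of_le (fun k => mul_nonneg (hK n k) (ha k)) fun k =>
    mul_le_mul_of_nonneg_right (by simpa using hKB k {n}) (ha k)

lemma summable_tsum_kernel_mul (hK : ∀ n k, 0 ≤ K n k)
    (hKB : ∀ k (u : Finset ι), ∑ n ∈ u, K n k ≤ B) (ha : ∀ k, 0 ≤ a k) (hsa : Summable a) :
    Summable fun n => ∑' k, K n k * a k := by
  have hrow := summable_kernel_mul hK hKB ha hsa
  refine summable_of_sum_le (c := B * ∑' k, a k)
    (fun n => tsum_nonneg fun k => mul_nonneg (hK n k) (ha k)) fun u => ?_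
  calc ∑ n ∈ u, ∑' k, K n k * a k = ∑' k, ∑ n ∈ u, K n k * a k :=
        (Summable.tsum_finsetSum fun n _ => hrow n).symm
    _ ≤ ∑' k, B * a k := by
        refine Summable.tsum_le_tsum (fun k => ?_) (summable_sum fun n _ => hrow n)
          (hsa.mul_left B)
        rw [← Finset.sum_mul]
        exact mul_le_mul_of_nonneg_right (hKB k u) (ha k)
    _ = B * ∑' k, a k := tsum_mul_left

end Schur

section Integrals

variable {g : ℝ → ℝ}

lemma integrable_w_mul (hg : Integrable g) (κ : ℝ) : Integrable fun ξ => w ξ κ * g ξ :=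
  hg.bdd_mul (measurable_w κ).aestronglyMeasurable <| ae_of_all _ fun ξ => by
    rw [Real.norm_of_nonneg (w_nonneg ξ κ)]
    exact w_le_three_div_sixteen ξ κ

lemma hasSum_setIntegral_LPregion (hg : Integrable g) :
    HasSum (fun k => ∫ ξ in LPregion k, g ξ) (∫ ξ, g ξ) := by
  simpa [iUnion_LPregion] using
    hasSum_integral_iUnion measurableSet_LPregion pairwise_disjoint_LPregion hg.integrableOn

variable (hg : Integrable g) (hg0 : ∀ ξ, 0 ≤ g ξ)
include hg hg0

lemma setIntegral_LPregion_zero_le :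
    ∫ ξ in LPregion 0, g ξ ≤ 2 * ∫ ξ, g ξ / (1 + ξ ^ 2) := by
  have hint : Integrable fun ξ => g ξ / (1 + ξ ^ 2) := by
    refine hg.mono' (hg.aemeasurable.div (by fun_prop)).aestronglyMeasurable
      (ae_of_all _ fun ξ => ?_)
    rw [Real.norm_of_nonneg (by have := hg0 ξ; positivity)]
    exact div_le_self (hg0 ξ) (by nlinarith [sq_nonneg ξ])
  calc ∫ ξ in LPregion 0, g ξ ≤ ∫ ξ in LPregion 0, 2 * (g ξ / (1 + ξ ^ 2)) := by
        refine setIntegral_mono_on hg.integrableOn (hint.const_mul 2).integrableOn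
          (measurableSet_LPregion 0) fun ξ hξ => ?_
        have hξ2 : ξ ^ 2 ≤ 1 := by simpa using sq_le_four_pow_of_mem_LPregion hξ
        rw [mul_div_assoc', le_div_iff₀ (by positivity)]
        nlinarith [hg0 ξ]
    _ = 2 * ∫ ξ in LPregion 0, g ξ / (1 + ξ ^ 2) := integral_const_mul _ _
    _ ≤ 2 * ∫ ξ, g ξ / (1 + ξ ^ 2) := mul_le_mul_of_nonneg_left
        (setIntegral_le_integral hint (ae_of_all _ fun ξ => by have := hg0 ξ; positivity))
        zero_le_two

lemma setIntegral_LPregion_le_integral_w {k : ℕ} (hk : k ≠ 0) :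
    ∫ ξ in LPregion k, g ξ ≤ 160 / 3 * ∫ ξ, w ξ (2 ^ k) * g ξ := by
  calc ∫ ξ in LPregion k, g ξ ≤ ∫ ξ in LPregion k, 160 / 3 * (w ξ (2 ^ k) * g ξ) := by
        refine setIntegral_mono_on hg.integrableOn
          ((integrable_w_mul hg _).const_mul _).integrableOn (measurableSet_LPregion k)
          fun ξ hξ => ?_
        nlinarith [hg0 ξ, three_div_160_le_w_two_pow_of_mem_LPregion hk hξ]
    _ = 160 / 3 * ∫ ξ in LPregion k, w ξ (2 ^ k) * g ξ := integral_const_mul _ _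
    _ ≤ 160 / 3 * ∫ ξ, w ξ (2 ^ k) * g ξ := mul_le_mul_of_nonneg_left
        (setIntegral_le_integral (integrable_w_mul hg _)
          (ae_of_all _ fun ξ => mul_nonneg (w_nonneg _ _) (hg0 ξ))) (by norm_num)

lemma setIntegral_LPregion_w_le (n k : ℕ) :
    ∫ ξ in LPregion k, w ξ (2 ^ n) * g ξ ≤ 3 * (1 / 4) ^ Nat.dist n k * ∫ ξ in LPregion k, g ξ := by
  rw [← integral_const_mul]
  exact setIntegral_mono_on (integrable_w_mul hg _).integrableOn
    (hg.const_mul _).integrableOn (measurableSet_LPregion k) fun ξ hξ =>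
      mul_le_mul_of_nonneg_right (w_two_pow_le_of_mem_LPregion hξ n) (hg0 ξ)

end Integrals

section Embedding

variable {s : ℝ} {g : ℝ → ℝ} (hs : 0 ≤ s) (hg : Integrable g) (hg0 : ∀ ξ, 0 ≤ g ξ)
include hs hg hg0

lemma summable_two_pow_rpow_mul_integral_w (hs1 : s < 1)
    (ha : Summable fun k : ℕ => ((2 : ℝ) ^ k) ^ (2 * s) * ∫ ξ in LPregion k, g ξ) :
    Summable fun n : ℕ => ((2 : ℝ) ^ n) ^ (2 * s) * ∫ ξ, w ξ (2 ^ n) * g ξ := by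
  set r : ℝ := (2 : ℝ) ^ (2 * s) / 4
  have hr0 : 0 ≤ r := by positivity
  have hr1 : r < 1 := by
    rw [div_lt_one four_pos, show (4 : ℝ) = 2 ^ (2 : ℝ) by norm_num]
    exact Real.rpow_lt_rpow_of_exponent_lt one_lt_two (by linarith)
  have hm0 : ∀ k, 0 ≤ ∫ ξ in LPregion k, g ξ := fun k => setIntegral_nonneg
    (measurableSet_LPregion k) fun ξ _ => hg0 ξ
  have hK : ∀ n k : ℕ, 0 ≤ 3 * r ^ Nat.dist n k := fun n k => by positivity
  have hKB : ∀ (k : ℕ) (u : Finset ℕ), ∑ n ∈ u, 3 * r ^ Nat.dist n k ≤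
      3 * ∑' z : ℤ, r ^ z.natAbs := fun k u => by
    rw [← Finset.mul_sum]
    exact mul_le_mul_of_nonneg_left (sum_pow_dist_le_tsum hr0 hr1 k u) (by norm_num)
  have ha0 : ∀ k : ℕ, 0 ≤ ((2 : ℝ) ^ k) ^ (2 * s) * ∫ ξ in LPregion k, g ξ := fun k =>
    mul_nonneg (by positivity) (hm0 k)
  refine (summable_tsum_kernel_mul hK hKB ha0 ha).of_nonneg_of_le (fun n => mul_nonneg
    (by positivity) (integral_nonneg fun ξ => mul_nonneg (w_nonneg _ _) (hg0 ξ))) fun n => ?_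
  rw [← ((hasSum_setIntegral_LPregion (integrable_w_mul hg _)).mul_left _).tsum_eq]
  refine Summable.tsum_le_tsum (fun k => ?_)
    ((hasSum_setIntegral_LPregion (integrable_w_mul hg _)).mul_left _).summable
    (summable_kernel_mul hK hKB ha0 ha n)
  calc ((2 : ℝ) ^ n) ^ (2 * s) * ∫ ξ in LPregion k, w ξ (2 ^ n) * g ξ
      ≤ ((2 : ℝ) ^ n) ^ (2 * s) * (3 * (1 / 4) ^ Nat.dist n k * ∫ ξ in LPregion k, g ξ) :=
        mul_le_mul_of_nonneg_left (setIntegral_LPregion_w_le hg hg0 n k) (by positivity)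
    _ = 3 * (((2 : ℝ) ^ n) ^ (2 * s) * (1 / 4) ^ Nat.dist n k) * ∫ ξ in LPregion k, g ξ := by
        ring
    _ ≤ 3 * (r ^ Nat.dist n k * ((2 : ℝ) ^ k) ^ (2 * s)) * ∫ ξ in LPregion k, g ξ := by
        gcongr 3 * ?_ * _
        · exact hm0 k
        · exact two_pow_rpow_mul_le hs n k
    _ = 3 * r ^ Nat.dist n k * (((2 : ℝ) ^ k) ^ (2 * s) * ∫ ξ in LPregion k, g ξ) := by ring

theorem tsum_two_pow_rpow_mul_setIntegral_LPregion_le (hs1 : s < 1) :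
    ∑' k : ℕ, ((2 : ℝ) ^ k) ^ (2 * s) * ∫ ξ in LPregion k, g ξ ≤
      160 / 3 * ((∫ ξ, g ξ / (1 + ξ ^ 2)) +
        ∑' n : ℕ, ((2 : ℝ) ^ n) ^ (2 * s) * ∫ ξ, w ξ (2 ^ n) * g ξ) := by
  set A := ∫ ξ, g ξ / (1 + ξ ^ 2)
  set b : ℕ → ℝ := fun n => ((2 : ℝ) ^ n) ^ (2 * s) * ∫ ξ, w ξ (2 ^ n) * g ξ
  have hA : 0 ≤ A := integral_nonneg fun ξ => by have := hg0 ξ; positivity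
  have hb : ∀ n, 0 ≤ b n := fun n => mul_nonneg (by positivity)
    (integral_nonneg fun ξ => mul_nonneg (w_nonneg _ _) (hg0 ξ))
  by_cases ha : Summable fun k : ℕ => ((2 : ℝ) ^ k) ^ (2 * s) * ∫ ξ in LPregion k, g ξ
  swap
  · rw [tsum_eq_zero_of_not_summable ha]
    exact mul_nonneg (by norm_num) (add_nonneg hA (tsum_nonneg hb))
  have hsb : Summable b := summable_two_pow_rpow_mul_integral_w hs hg hg0 hs1 ha
  have hsA : Summable fun k : ℕ => if k = 0 then A else 0 := (hasSum_ite_eq 0 A).summable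
  have hterm : ∀ k : ℕ, ((2 : ℝ) ^ k) ^ (2 * s) * ∫ ξ in LPregion k, g ξ ≤
      160 / 3 * ((if k = 0 then A else 0) + b k) := fun k => by
    rcases eq_or_ne k 0 with rfl | hk
    · have := setIntegral_LPregion_zero_le hg hg0
      simp only [pow_zero, Real.one_rpow, one_mul, if_true]
      linarith [hb 0]
    · rw [if_neg hk, zero_add, mul_left_comm]
      exact mul_le_mul_of_nonneg_left (setIntegral_LPregion_le_integral_w hg hg0 hk)
        (by positivity)
  calc _ ≤ ∑' k : ℕ, 160 / 3 * ((if k = 0 then A else 0) + b k) :=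
        Summable.tsum_le_tsum hterm ha ((hsA.add hsb).mul_left _)
    _ = 160 / 3 * (A + ∑' n, b n) := by
        rw [tsum_mul_left, hsA.tsum_add hsb, tsum_ite_eq]

end Embedding

/-- For `0 < s < 1/2` and `f ∈ L²(ℝ)` (given via `f̂`),
`Σ_M M^{2s}‖P_M f‖²_{L²} ≤ C(s)(‖f‖²_{H^{-1}} + Σ_N N^{2s} ∫ w(ξ,N)|f̂(ξ)|² dξ)`,
where `‖f‖²_{H^{-1}} = ∫ |f̂(ξ)|²/(1+ξ²) dξ`. -/
theorem stmt5 (s : ℝ) (hs : 0 < s) (hs' : s < 1 / 2) :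
    ∃ C > (0 : ℝ), ∀ fhat : ℝ → ℂ,
      Integrable (fun ξ : ℝ => ‖fhat ξ‖ ^ 2) →
      ∑' k : ℕ, ((2 : ℝ) ^ k) ^ (2 * s) * ∫ ξ in LPregion k, ‖fhat ξ‖ ^ 2
        ≤ C * ((∫ ξ : ℝ, ‖fhat ξ‖ ^ 2 / (1 + ξ ^ 2)) +
            ∑' n : ℕ, ((2 : ℝ) ^ n) ^ (2 * s) * ∫ ξ : ℝ, w ξ ((2 : ℝ) ^ n) * ‖fhat ξ‖ ^ 2) :=
  ⟨160 / 3, by norm_num, fun _ hf =>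
    tsum_two_pow_rpow_mul_setIntegral_LPregion_le hs.le hf (fun _ => by positivity) (by linarith)⟩
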